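/- arXiv:1009.2418 — 3 statements merged into one kernel-verified Lean document; each statement's English description precedes it below -/
import Mathlib

section
/- Let Φ : ℝ → ℂ be a continuous function with Φ(0) = 0 (a Lévy exponent). Define operators on such functions by (𝓘Φ)(y) = ∫_0^∞ Φ(e^{-s} y) ds and (𝓙Φ)(y) = ∫_0^1 Φ(s y) ds, assuming both integrals converge for all y. Then (𝓙Φ)(y) + (𝓘𝓙Φ)(y) = (𝓘Φ)(y) for all y, i.e., 𝓘∘𝓙 = 𝓘 - 𝓙 as operators on Lévy exponents. -/
open MeasureTheory

/-- The random integral mapping `I^{e^{-s},s}_{(0,∞)}` on Lévy exponents: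
`(𝓘Φ)(y) = ∫_0^∞ Φ(e^{-s} y) ds`. -/
noncomputable def Ical (Φ : ℝ → ℂ) : ℝ → ℂ :=
  fun y => ∫ s in Set.Ioi (0 : ℝ), Φ (Real.exp (-s) * y)

/-- The random integral mapping `I^{s,s}_{(0,1)}` on Lévy exponents:
`(𝓙Φ)(y) = ∫_0^1 Φ(s y) ds`. -/
noncomputable def Jcal (Φ : ℝ → ℂ) : ℝ → ℂ :=
  fun y => ∫ s in (0 : ℝ)..1, Φ (s * y)

open Filter Topology Real

/-! Fix `y` and put `H t = 𝓙Φ(e^{-t} y) = e^t ∫_0^{e^{-t}} Φ(u y) du`. Then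
`H' = H - Φ(e^{-t} y)`, and `H t → 𝓙Φ(0) = Φ(0) = 0` as `t → ∞` by continuity of `𝓙Φ`.
Integrating `H'` over `(0, ∞)` gives `-H 0 = 𝓘𝓙Φ(y) - 𝓘Φ(y)`, and `H 0 = 𝓙Φ(y)`. -/

theorem hasDerivAt_exp_smul_integral_exp_neg {E : Type*} [NormedAddCommGroup E]
    [NormedSpace ℝ E] [CompleteSpace E] {f : ℝ → E} (hf : Continuous f) (t : ℝ) :
    HasDerivAt (fun s => exp s • ∫ u in (0 : ℝ)..exp (-s), f u)
      ((exp t • ∫ u in (0 : ℝ)..exp (-t), f u) - f (exp (-t))) t := by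
  have hprim : HasDerivAt (fun x => ∫ u in (0 : ℝ)..x, f u) (f (exp (-t))) (exp (-t)) :=
    intervalIntegral.integral_hasDerivAt_right (hf.intervalIntegrable _ _)
      (hf.stronglyMeasurableAtFilter _ _) hf.continuousAt
  have hexp : HasDerivAt (fun s => exp (-s)) (-exp (-t)) t := by
    simpa using (hasDerivAt_neg t).exp
  refine ((hasDerivAt_exp t).smul (hprim.scomp t hexp)).congr_deriv ?_
  rw [smul_smul, mul_neg, ← exp_add, add_neg_cancel, exp_zero, neg_one_smul, add_comm,
    sub_eq_add_neg, Function.comp_apply]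

theorem Jcal_exp_neg_mul (Φ : ℝ → ℂ) (t y : ℝ) :
    Jcal Φ (exp (-t) * y) = exp t • ∫ u in (0 : ℝ)..exp (-t), Φ (u * y) := by
  have := intervalIntegral.integral_comp_mul_left (fun u => Φ (u * y)) (exp_ne_zero (-t))
    (a := 0) (b := 1)
  simp only [mul_zero, mul_one, ← exp_neg, neg_neg] at this
  rw [Jcal, ← this]
  congr 1 with s
  ring_nf

theorem hasDerivAt_Jcal_exp_neg_mul {Φ : ℝ → ℂ} (hΦ : Continuous Φ) (y t : ℝ) :
    HasDerivAt (fun s => Jcal Φ (exp (-s) * y))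
      (Jcal Φ (exp (-t) * y) - Φ (exp (-t) * y)) t := by
  simp only [Jcal_exp_neg_mul]
  exact hasDerivAt_exp_smul_integral_exp_neg (hΦ.comp (continuous_mul_const y)) t

theorem continuous_Jcal {Φ : ℝ → ℂ} (hΦ : Continuous Φ) : Continuous (Jcal Φ) :=
  intervalIntegral.continuous_parametric_intervalIntegral_of_continuous' (by fun_prop) 0 1

theorem Jcal_apply_zero (Φ : ℝ → ℂ) : Jcal Φ 0 = Φ 0 := by
  simp [Jcal]

theorem tendsto_Jcal_exp_neg_mul_atTop {Φ : ℝ → ℂ} (hΦ : Continuous Φ) (hΦ0 : Φ 0 = 0)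
    (y : ℝ) : Tendsto (fun t => Jcal Φ (exp (-t) * y)) atTop (𝓝 0) := by
  have hlim : Tendsto (fun t => exp (-t) * y) atTop (𝓝 0) := by
    simpa using tendsto_exp_neg_atTop_nhds_zero.mul_const y
  have := ((continuous_Jcal hΦ).tendsto 0).comp hlim
  rwa [Jcal_apply_zero, hΦ0] at this

theorem Jcal_add_Ical_Jcal_general (Φ : ℝ → ℂ) (hΦc : Continuous Φ) (hΦ0 : Φ 0 = 0)
    (hI : ∀ y : ℝ, IntegrableOn (fun s => Φ (Real.exp (-s) * y)) (Set.Ioi 0))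
    (hIJ : ∀ y : ℝ, IntegrableOn (fun s => Jcal Φ (Real.exp (-s) * y)) (Set.Ioi 0)) :
    ∀ y : ℝ, Jcal Φ y + Ical (Jcal Φ) y = Ical Φ y := by
  intro y
  have hFTC := integral_Ioi_of_hasDerivAt_of_tendsto'
    (fun t _ => hasDerivAt_Jcal_exp_neg_mul hΦc y t) ((hIJ y).sub (hI y))
    (tendsto_Jcal_exp_neg_mul_atTop hΦc hΦ0 y)
  rw [integral_sub (hIJ y) (hI y)] at hFTC
  simp only [neg_zero, exp_zero, one_mul, zero_sub] at hFTC
  simp only [Ical]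
  linear_combination hFTC

/-- `𝓙Φ + 𝓘𝓙Φ = 𝓘Φ`, i.e. `𝓘 ∘ 𝓙 = 𝓘 - 𝓙` on Lévy exponents. -/
theorem Jcal_add_Ical_Jcal (Φ : ℝ → ℂ) (hΦc : Continuous Φ) (hΦ0 : Φ 0 = 0)
    (hI : ∀ y : ℝ, IntegrableOn (fun s => Φ (Real.exp (-s) * y)) (Set.Ioi 0))
    (hJ : ∀ y : ℝ, IntervalIntegrable (fun s => Φ (s * y)) volume 0 1)
    (hIJ : ∀ y : ℝ, IntegrableOn (fun s => Jcal Φ (Real.exp (-s) * y)) (Set.Ioi 0)) :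
    ∀ y : ℝ, Jcal Φ y + Ical (Jcal Φ) y = Ical Φ y :=
  Jcal_add_Ical_Jcal_general Φ hΦc hΦ0 hI hIJ
end

section
/- With the operators 𝓘 and 𝓙 acting on Lévy exponents Φ as (𝓘Φ)(y) = ∫_0^∞ Φ(e^{-s}y) ds and (𝓙Φ)(y) = ∫_0^1 Φ(sy) ds (assuming absolute convergence), the identity 𝓙(Φ + 𝓘Φ) = 𝓘Φ holds, i.e., 𝓙(I + 𝓘) = 𝓘. -/
open MeasureTheory

/-!
For `s > 0` the substitution `t ↦ t - log s` gives `𝓘Φ(s y) = ∫_{-log s}^∞ Φ(e^{-w} y) dw`, so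
`d/ds (s · 𝓘Φ(s y)) = 𝓘Φ(s y) + Φ(s y)`. Since `𝓘Φ(s y)` stays bounded by
`∫_0^∞ |Φ(e^{-w} y)| dw` on `(0, 1]`, the function `s · 𝓘Φ(s y)` is continuous at `0` with value `0`,
and the fundamental theorem of calculus on `[0, 1]` gives `𝓙(Φ + 𝓘Φ)(y) = 𝓘Φ(y)`.
-/

open Set Filter Topology Real

section TailIntegral

variable {E : Type*} [NormedAddCommGroup E] [NormedSpace ℝ E]

theorem setIntegral_Ioi_comp_add_right (f : ℝ → E) (a d : ℝ) :
    ∫ x in Ioi a, f (x + d) = ∫ x in Ioi (a + d), f x := by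
  simpa using (measurePreserving_add_right volume d).setIntegral_preimage_emb
    (MeasurableEquiv.addRight d).measurableEmbedding f (Ioi (a + d))

theorem hasDerivAt_integral_Ioi [CompleteSpace E] {f : ℝ → E} {a₀ : ℝ} (hf : Continuous f)
    (hint : IntegrableOn f (Ioi a₀)) (a : ℝ) :
    HasDerivAt (fun b => ∫ x in Ioi b, f x) (-f a) a := by
  have htail : (fun b => ∫ x in Ioi b, f x) = fun b => (∫ x in b..a₀, f x) + ∫ x in Ioi a₀, f x :=
    funext fun b =>
      (intervalIntegral.integral_interval_add_Ioi' (hf.intervalIntegrable _ _) hint).symm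
  rw [htail]
  exact (intervalIntegral.integral_hasDerivAt_left (hf.intervalIntegrable _ _)
    hf.aestronglyMeasurable.stronglyMeasurableAtFilter hf.continuousAt).add_const _

end TailIntegral

section RandomIntegral

variable (Φ : ℝ → ℂ) (y : ℝ)

theorem Ical_mul_eq_integral_Ioi {s : ℝ} (hs : 0 < s) :
    Ical Φ (s * y) = ∫ w in Ioi (-log s), Φ (exp (-w) * y) := by
  have hshift : ∀ t, Φ (exp (-t) * (s * y)) = Φ (exp (-(t + -log s)) * y) := fun t => by
    rw [neg_add, neg_neg, exp_add, exp_log hs, mul_assoc]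
  simp only [Ical, hshift]
  rw [setIntegral_Ioi_comp_add_right (fun w => Φ (exp (-w) * y)), zero_add]

variable {Φ y}

theorem norm_Ical_mul_le (hI : IntegrableOn (fun w => Φ (exp (-w) * y)) (Ioi 0)) {s : ℝ}
    (hs : s ∈ Ioc 0 1) : ‖Ical Φ (s * y)‖ ≤ ∫ w in Ioi 0, ‖Φ (exp (-w) * y)‖ := by
  rw [Ical_mul_eq_integral_Ioi Φ y hs.1]
  refine (norm_integral_le_integral_norm _).trans (setIntegral_mono_set hI.norm
    (.of_forall fun _ => norm_nonneg _) (Ioi_subset_Ioi ?_).eventuallyLE)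
  simpa using log_nonpos hs.1.le hs.2

theorem hasDerivAt_Ical_mul (hΦ : Continuous Φ)
    (hI : IntegrableOn (fun w => Φ (exp (-w) * y)) (Ioi 0)) {s : ℝ} (hs : 0 < s) :
    HasDerivAt (fun s => Ical Φ (s * y)) (s⁻¹ • Φ (s * y)) s := by
  have hT := (hasDerivAt_integral_Ioi (by fun_prop) hI (-log s)).scomp s
    (hasDerivAt_log hs.ne').neg
  rw [neg_neg, exp_log hs, neg_smul_neg] at hT
  exact hT.congr_of_eventuallyEq <| (lt_mem_nhds hs).mono fun t ht =>
    Ical_mul_eq_integral_Ioi Φ y ht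

theorem hasDerivAt_smul_Ical_mul (hΦ : Continuous Φ)
    (hI : IntegrableOn (fun w => Φ (exp (-w) * y)) (Ioi 0)) {s : ℝ} (hs : 0 < s) :
    HasDerivAt (fun s => s • Ical Φ (s * y)) (Ical Φ (s * y) + Φ (s * y)) s := by
  have h := (hasDerivAt_id s).smul (hasDerivAt_Ical_mul hΦ hI hs)
  rwa [id_eq, smul_inv_smul₀ hs.ne', one_smul, add_comm] at h

theorem continuousWithinAt_smul_Ical_mul_zero
    (hI : IntegrableOn (fun w => Φ (exp (-w) * y)) (Ioi 0)) :
    ContinuousWithinAt (fun s => s • Ical Φ (s * y)) (Icc 0 1) 0 := by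
  set C := ∫ w in Ioi 0, ‖Φ (exp (-w) * y)‖
  have hbound : ∀ t ∈ Icc (0 : ℝ) 1, ‖t • Ical Φ (t * y)‖ ≤ |t| * C := by
    rintro t ⟨ht0, ht1⟩
    rw [norm_smul, norm_eq_abs]
    rcases ht0.eq_or_lt with rfl | ht0
    · simp
    · exact mul_le_mul_of_nonneg_left (norm_Ical_mul_le hI ⟨ht0, ht1⟩) (abs_nonneg t)
  have hlim : Tendsto (fun t : ℝ => |t| * C) (𝓝 0) (𝓝 0) := by
    simpa using (continuous_abs.tendsto (0 : ℝ)).mul_const C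
  rw [ContinuousWithinAt, zero_smul]
  exact squeeze_zero_norm' (eventually_nhdsWithin_of_forall hbound)
    (hlim.mono_left nhdsWithin_le_nhds)

theorem continuousOn_smul_Ical_mul (hΦ : Continuous Φ)
    (hI : IntegrableOn (fun w => Φ (exp (-w) * y)) (Ioi 0)) :
    ContinuousOn (fun s => s • Ical Φ (s * y)) (Icc 0 1) := by
  rintro s ⟨hs0, -⟩
  rcases hs0.eq_or_lt with rfl | hs0
  · exact continuousWithinAt_smul_Ical_mul_zero hI
  · exact (hasDerivAt_smul_Ical_mul hΦ hI hs0).continuousAt.continuousWithinAt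

end RandomIntegral

theorem Jcal_add_self_Ical_general (Φ : ℝ → ℂ) (hΦc : Continuous Φ)
    (hI : ∀ y : ℝ, IntegrableOn (fun s => Φ (Real.exp (-s) * y)) (Set.Ioi 0))
    (hJI : ∀ y : ℝ, IntervalIntegrable (fun s => Ical Φ (s * y)) volume 0 1) :
    ∀ y : ℝ, Jcal (fun z => Φ z + Ical Φ z) y = Ical Φ y := by
  intro y
  have hJ : IntervalIntegrable (fun s => Φ (s * y)) volume 0 1 :=
    (hΦc.comp (continuous_id.mul continuous_const)).intervalIntegrable 0 1
  have hFTC := intervalIntegral.integral_eq_sub_of_hasDerivAt_of_le zero_le_one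
    (continuousOn_smul_Ical_mul hΦc (hI y))
    (fun s hs => hasDerivAt_smul_Ical_mul hΦc (hI y) hs.1) ((hJI y).add hJ)
  simpa [Jcal, add_comm] using hFTC

/-- `𝓙(Φ + 𝓘Φ) = 𝓘Φ`, i.e. `𝓙 ∘ (I + 𝓘) = 𝓘` on Lévy exponents. -/
theorem Jcal_add_self_Ical (Φ : ℝ → ℂ) (hΦc : Continuous Φ) (hΦ0 : Φ 0 = 0)
    (hI : ∀ y : ℝ, IntegrableOn (fun s => Φ (Real.exp (-s) * y)) (Set.Ioi 0))
    (hJ : ∀ y : ℝ, IntervalIntegrable (fun s => Φ (s * y)) volume 0 1)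
    (hJI : ∀ y : ℝ, IntervalIntegrable (fun s => Ical Φ (s * y)) volume 0 1) :
    ∀ y : ℝ, Jcal (fun z => Φ z + Ical Φ z) y = Ical Φ y :=
  Jcal_add_self_Ical_general Φ hΦc hI hJI
end

section
/- Composition identity of random integral mappings on the level of Lévy exponents: for a Lévy exponent Φ (all integrals assumed absolutely convergent), ∫_0^1 (∫_0^∞ Φ(e^{-t}·sy) dt) ds = ∫_0^∞ Φ(e^{-s}y) d(s + e^{-s} − 1), i.e., (𝓙∘𝓘)Φ(y) = ∫_0^∞ Φ(e^{-s}y)(1 − e^{-s}) ds. -/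
/-! Substituting `s = e^{-u}` in the outer integral and shifting the inner one turns `𝓙(𝓘Φ)(y)`
into `∫_0^∞ e^{-u} ∫_u^∞ Φ(e^{-t} y) dt du`. Exchanging the order of integration, which the
absolute convergence of `∫_0^∞ |Φ(e^{-t} y)| (1 - e^{-t}) dt` justifies, integrates `e^{-u}` over
`0 < u < t` and produces the weight `1 - e^{-t}`. -/

open MeasureTheory

section

open Real Set

variable {E : Type*} [NormedAddCommGroup E] [NormedSpace ℝ E]

theorem integral_Ioi_comp_add_right (f : ℝ → E) (u : ℝ) :
    ∫ t in Ioi 0, f (t + u) = ∫ t in Ioi u, f t := by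
  simpa using (measurePreserving_add_right volume u).setIntegral_preimage_emb
    (measurableEmbedding_addRight u) f (Ioi u)

theorem integral_Ioi_exp_neg_smul_comp_exp_neg (g : ℝ → E) :
    ∫ u in Ioi 0, exp (-u) • g (exp (-u)) = ∫ s in (0 : ℝ)..1, g s := by
  rw [integral_comp_neg_Ioi 0 (fun x => exp x • g (exp x)), neg_zero,
    intervalIntegral.integral_of_le zero_le_one]
  simpa [abs_of_pos (exp_pos _)] using (integral_image_eq_integral_abs_deriv_smul
    (measurableSet_Iic (a := 0)) (fun x _ ↦ (hasDerivAt_exp x).hasDerivWithinAt)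
    (fun x _ y _ hxy ↦ exp_injective hxy) g).symm

theorem one_sub_exp_neg_pos {t : ℝ} (ht : 0 < t) : 0 < 1 - exp (-t) := by
  simpa using ht

theorem integral_Ioo_exp_neg {t : ℝ} (ht : 0 ≤ t) : ∫ u in Ioo 0 t, exp (-u) = 1 - exp (-t) := by
  rw [← integral_Ioc_eq_integral_Ioo, ← intervalIntegral.integral_of_le ht]
  simp

theorem integral_Ioi_indicator_Iio_exp_neg_smul [CompleteSpace E] {t : ℝ} (ht : 0 ≤ t) (c : E) :
    ∫ u in Ioi 0, (Iio t).indicator (fun u => exp (-u) • c) u = (1 - exp (-t)) • c := by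
  rw [integral_indicator measurableSet_Iio, Measure.restrict_restrict measurableSet_Iio,
    Iio_inter_Ioi, integral_smul_const, integral_Ioo_exp_neg ht]

theorem aestronglyMeasurable_of_integrableOn_one_sub_exp_neg_smul {f : ℝ → E}
    (hf : IntegrableOn (fun t => (1 - exp (-t)) • f t) (Ioi 0)) :
    AEStronglyMeasurable f (volume.restrict (Ioi 0)) := by
  refine ((by fun_prop : Measurable fun t : ℝ => (1 - exp (-t))⁻¹).aestronglyMeasurable.smul
    hf.aestronglyMeasurable).congr (ae_restrict_of_forall_mem measurableSet_Ioi fun t ht => ?_)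
  rw [Pi.smul_apply', smul_smul, inv_mul_cancel₀ (one_sub_exp_neg_pos ht).ne', one_smul]

theorem integrable_indicator_lt_exp_neg_smul {f : ℝ → E}
    (hf : IntegrableOn (fun t => (1 - exp (-t)) • f t) (Ioi 0)) :
    Integrable ({p : ℝ × ℝ | p.1 < p.2}.indicator fun p => exp (-p.1) • f p.2)
      ((volume.restrict (Ioi 0)).prod (volume.restrict (Ioi 0))) := by
  have hslice (u t : ℝ) : ({p : ℝ × ℝ | p.1 < p.2}.indicator fun p => exp (-p.1) • f p.2) (u, t)
      = (Iio t).indicator (fun u => exp (-u) • f t) u := by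
    simp [indicator_apply]
  refine (integrable_prod_iff' ?_).2 ⟨ae_of_all _ fun t => ?_, ?_⟩
  · exact ((by fun_prop : Continuous fun p : ℝ × ℝ => exp (-p.1)).aestronglyMeasurable.smul
      (aestronglyMeasurable_of_integrableOn_one_sub_exp_neg_smul hf).comp_snd).indicator
      (measurableSet_lt measurable_fst measurable_snd)
  · simp only [hslice]
    exact ((integrableOn_exp_neg_Ioi 0).smul_const (f t)).indicator measurableSet_Iio
  · refine IntegrableOn.congr_fun hf.norm (fun t ht => ?_) measurableSet_Ioi
    simp only [hslice, norm_indicator_eq_indicator_norm, norm_smul,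
      norm_of_nonneg (exp_pos _).le, ← smul_eq_mul]
    rw [integral_Ioi_indicator_Iio_exp_neg_smul (le_of_lt ht),
      norm_of_nonneg (one_sub_exp_neg_pos ht).le]

theorem integral_Ioi_exp_neg_smul_integral_Ioi [CompleteSpace E] {f : ℝ → E}
    (hf : IntegrableOn (fun t => (1 - exp (-t)) • f t) (Ioi 0)) :
    ∫ u in Ioi 0, exp (-u) • ∫ t in Ioi u, f t = ∫ t in Ioi 0, (1 - exp (-t)) • f t := by
  set K : ℝ × ℝ → E := {p : ℝ × ℝ | p.1 < p.2}.indicator fun p => exp (-p.1) • f p.2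
  have hrow : ∀ u ∈ Ioi (0 : ℝ), ∫ t in Ioi 0, K (u, t) = exp (-u) • ∫ t in Ioi u, f t := by
    intro u hu
    have hKu : (fun t => K (u, t)) = (Ioi u).indicator fun t => exp (-u) • f t := by
      ext t; simp [K, indicator_apply]
    rw [hKu, integral_indicator measurableSet_Ioi, Measure.restrict_restrict measurableSet_Ioi,
      Ioi_inter_Ioi, max_eq_left (le_of_lt hu), integral_smul]
  have hcol : ∀ t ∈ Ioi (0 : ℝ), ∫ u in Ioi 0, K (u, t) = (1 - exp (-t)) • f t := by
    intro t ht
    have hKt : (fun u => K (u, t)) = (Iio t).indicator fun u => exp (-u) • f t := by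
      ext u; simp [K, indicator_apply]
    rw [hKt, integral_Ioi_indicator_Iio_exp_neg_smul (le_of_lt ht)]
  calc ∫ u in Ioi 0, exp (-u) • ∫ t in Ioi u, f t
      = ∫ u in Ioi 0, ∫ t in Ioi 0, K (u, t) := (setIntegral_congr_fun measurableSet_Ioi hrow).symm
    _ = ∫ t in Ioi 0, ∫ u in Ioi 0, K (u, t) :=
          integral_integral_swap (integrable_indicator_lt_exp_neg_smul hf)
    _ = ∫ t in Ioi 0, (1 - exp (-t)) • f t := setIntegral_congr_fun measurableSet_Ioi hcol

theorem Ical_exp_neg_mul (Φ : ℝ → ℂ) (u y : ℝ) :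
    Ical Φ (exp (-u) * y) = ∫ t in Ioi u, Φ (exp (-t) * y) := by
  rw [Ical, ← integral_Ioi_comp_add_right _ u]
  refine setIntegral_congr_fun measurableSet_Ioi fun t _ => ?_
  rw [← mul_assoc, ← exp_add, neg_add]

end

theorem Jcal_comp_Ical_general (Φ : ℝ → ℂ)
    (hT : ∀ y : ℝ, IntegrableOn
      (fun s => Φ (Real.exp (-s) * y) * ((1 : ℂ) - Real.exp (-s))) (Set.Ioi 0)) :
    ∀ y : ℝ, Jcal (Ical Φ) y
      = ∫ s in Set.Ioi (0 : ℝ), Φ (Real.exp (-s) * y) * ((1 : ℂ) - Real.exp (-s)) := by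
  intro y
  have hsmul : (fun s => Φ (Real.exp (-s) * y) * ((1 : ℂ) - Real.exp (-s)))
      = fun s => (1 - Real.exp (-s)) • Φ (Real.exp (-s) * y) := by
    ext s
    rw [Complex.real_smul, mul_comm, Complex.ofReal_sub, Complex.ofReal_one]
  have hTy := hT y
  rw [hsmul] at hTy ⊢
  rw [Jcal, ← integral_Ioi_exp_neg_smul_comp_exp_neg]
  simp_rw [Ical_exp_neg_mul]
  exact integral_Ioi_exp_neg_smul_integral_Ioi hTy

/-- Composition identity `𝓙 ∘ 𝓘 = I^{e^{-s}, s+e^{-s}-1}_{(0,∞)}` on Lévy exponents: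
`∫_0^1 (∫_0^∞ Φ(e^{-t} s y) dt) ds = ∫_0^∞ Φ(e^{-s} y) (1 - e^{-s}) ds`. -/
theorem Jcal_comp_Ical (Φ : ℝ → ℂ) (hΦc : Continuous Φ) (hΦ0 : Φ 0 = 0)
    (hI : ∀ y : ℝ, IntegrableOn (fun s => Φ (Real.exp (-s) * y)) (Set.Ioi 0))
    (hJI : ∀ y : ℝ, IntervalIntegrable (fun s => Ical Φ (s * y)) volume 0 1)
    (hT : ∀ y : ℝ, IntegrableOn
      (fun s => Φ (Real.exp (-s) * y) * ((1 : ℂ) - Real.exp (-s))) (Set.Ioi 0)) :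
    ∀ y : ℝ, Jcal (Ical Φ) y
      = ∫ s in Set.Ioi (0 : ℝ), Φ (Real.exp (-s) * y) * ((1 : ℂ) - Real.exp (-s)) :=
  Jcal_comp_Ical_general Φ hT
end
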